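/- Let Q_d ⊂ ℝⁿ be a cube of edge d and let P_F : ℝⁿ → [0,1] be a function with P_F = 1 on a compact set F, ∫_{ℝⁿ}|∇P_F|² dx = cap(F), and such that u = (1 − P_F)ω where ω is smooth on Q_d ∖ e (e ⊂ Int F compact) with |ω| = 1. Then h_{a,V}(u,u)_{Q_d} ≤ cap(F) + ∫_{Q_d ∖ F} (|∇ω/(iω) + a|² + V) dx, where h_{a,V}(u,u)_{Q_d} = ∫_{Q_d}(|∇u + iau|² + V|u|²) dx. -/

import Mathlib

/-!
Write `u = c ω` with `c = 1 - P_F`, so `0 ≤ c ≤ 1`. Differentiating `|ω|² = 1` gives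
`Re(ω̄ ∂ⱼω) = 0` at almost every point of `Q ∖ F` (its density points), hence `∂ⱼω = i rⱼ ω`
with `rⱼ = ∂ⱼω/(iω)` real, and `∂ⱼu + i aⱼ u = (-∂ⱼP_F + i c (rⱼ + aⱼ)) ω` has squared modulus
`(∂ⱼP_F)² + c² (rⱼ + aⱼ)² ≤ (∂ⱼP_F)² + (rⱼ + aⱼ)²`. On `F` we have `u = 0` and only `|∇P_F|²`
survives. Integrating over `Q` and bounding `∫_Q |∇P_F|²` by `cap F` gives the estimate.
-/

open MeasureTheory

open scoped RealInnerProductSpace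

section FderivAe

variable {E : Type*} [NormedAddCommGroup E] [NormedSpace ℝ E] [FiniteDimensional ℝ E]
  [MeasurableSpace E] [BorelSpace E] (μ : Measure E) [μ.IsAddHaarMeasure] {s : Set E}

/-- Almost every point of `s` is a Lebesgue density point, where a function constant on `s`
has no room to vary. -/
theorem ae_fderiv_eq_zero_of_eqOn_const {g : E → ℝ} {c : ℝ} (hs : MeasurableSet s)
    (hg : ∀ x ∈ s, g x = c) (hdiff : ∀ x ∈ s, DifferentiableAt ℝ g x) :
    ∀ᵐ x ∂μ.restrict s, fderiv ℝ g x = 0 := by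
  rcases subsingleton_or_nontrivial E with hE | hE
  · exact Filter.Eventually.of_forall fun x => Subsingleton.elim _ _
  obtain ⟨v, hv⟩ := exists_ne (0 : E)
  -- `ApproximatesLinearOn.norm_fderiv_sub_le` needs a self-map of `E`: embed the values along `v`.
  set L := ContinuousLinearMap.toSpanSingleton ℝ v
  have happrox : ApproximatesLinearOn (fun x => L (g x)) (0 : E →L[ℝ] E) s 0 := by
    intro x hx y hy
    simp [hg x hx, hg y hy]
  filter_upwards [happrox.norm_fderiv_sub_le μ hs (fun x => L.comp (fderiv ℝ g x))
    fun x hx => (L.hasFDerivAt.comp x (hdiff x hx).hasFDerivAt).hasFDerivWithinAt] with x hx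
  have hL : L.comp (fderiv ℝ g x) = 0 := by simpa using hx
  ext w
  simpa [L, hv] using DFunLike.congr_fun hL w

theorem ae_inner_fderiv_eq_zero_of_norm_eq_const {G : Type*} [NormedAddCommGroup G]
    [InnerProductSpace ℝ G] {ω : E → G} {r : ℝ} (hs : MeasurableSet s)
    (hω : ∀ x ∈ s, ‖ω x‖ = r) (hdiff : ∀ x ∈ s, DifferentiableAt ℝ ω x) :
    ∀ᵐ x ∂μ.restrict s, ∀ v, ⟪ω x, fderiv ℝ ω x v⟫ = 0 := by
  have hsq := ae_fderiv_eq_zero_of_eqOn_const μ (g := fun x => ‖ω x‖ ^ 2) hs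
    (fun x hx => by rw [hω x hx]) fun x hx => (hdiff x hx).norm_sq ℝ
  filter_upwards [hsq, ae_restrict_mem hs] with x hx hxs v
  have := DFunLike.congr_fun hx v
  rw [(hdiff x hxs).hasFDerivAt.norm_sq.fderiv] at this
  simpa using this

end FderivAe

section RealTimesComplex

variable {E : Type*} [NormedAddCommGroup E] [NormedSpace ℝ E] {c : E → ℝ} {ω : E → ℂ} {x : E}

theorem fderiv_ofReal_mul_apply (hc : DifferentiableAt ℝ c x) (hω : DifferentiableAt ℝ ω x)
    (v : E) :
    fderiv ℝ (fun y => (c y : ℂ) * ω y) x v = c x * fderiv ℝ ω x v + fderiv ℝ c x v * ω x := by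
  have hsmul : (fun y => (c y : ℂ) * ω y) = c • ω := by
    funext y
    simp [Complex.real_smul]
  rw [hsmul, fderiv_smul hc hω]
  simp [Complex.real_smul]

theorem DifferentiableAt.of_ofReal_mul (hu : DifferentiableAt ℝ (fun y => (c y : ℂ) * ω y) x)
    (hω : DifferentiableAt ℝ ω x) (hω0 : ω x ≠ 0) : DifferentiableAt ℝ c x := by
  have hc : (fun y => ((c y : ℂ) * ω y * (ω y)⁻¹).re) =ᶠ[nhds x] c := by
    filter_upwards [hω.continuousAt.eventually_ne hω0] with y hy
    simp [hy]
  exact hc.differentiableAt_iff.mp (Complex.reCLM.differentiableAt.comp x (hu.mul (hω.inv hω0)))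

theorem fderiv_ofReal_mul_apply_of_eq_zero (hcx : c x = 0) (hω : DifferentiableAt ℝ ω x)
    (hω0 : ω x ≠ 0) (v : E) :
    fderiv ℝ (fun y => (c y : ℂ) * ω y) x v = fderiv ℝ c x v * ω x := by
  by_cases hc : DifferentiableAt ℝ c x
  · simp [fderiv_ofReal_mul_apply hc hω, hcx]
  · have hu : ¬DifferentiableAt ℝ (fun y => (c y : ℂ) * ω y) x :=
      fun hu => hc (hu.of_ofReal_mul hω hω0)
    simp [fderiv_zero_of_not_differentiableAt hc, fderiv_zero_of_not_differentiableAt hu]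

end RealTimesComplex

theorem eq_I_mul_mul_re_div_of_inner_eq_zero {z w : ℂ} (hz : ‖z‖ = 1) (hzw : ⟪z, w⟫ = 0) :
    w = Complex.I * z * (w / (Complex.I * z)).re := by
  have hzz : (starRingEnd ℂ) z * z = 1 := by
    rw [mul_comm, Complex.mul_conj, Complex.normSq_eq_norm_sq, hz]; norm_num
  rw [Complex.inner] at hzw
  set s := (w * (starRingEnd ℂ) z).im
  have hq : w * (starRingEnd ℂ) z = Complex.I * s := Complex.ext (by simp [hzw]) (by simp [s])
  have hw : w = Complex.I * z * s := by
    calc w = w * (starRingEnd ℂ) z * z := by rw [mul_assoc, hzz, mul_one]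
      _ = Complex.I * z * s := by rw [hq]; ring
  have hIz : Complex.I * z ≠ 0 := mul_ne_zero Complex.I_ne_zero (by rintro rfl; simp at hz)
  rw [hw, mul_div_cancel_left₀ _ hIz, Complex.ofReal_re]

theorem norm_sq_tangent_add_le {z w : ℂ} (hz : ‖z‖ = 1) (hzw : ⟪z, w⟫ = 0) {t : ℝ}
    (ht : |t| ≤ 1) (p A : ℝ) :
    ‖t * w + p * z + Complex.I * A * (t * z)‖ ^ 2 ≤ p ^ 2 + ((w / (Complex.I * z)).re + A) ^ 2 := by
  set r := (w / (Complex.I * z)).re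
  have hexpr : (t : ℂ) * w + p * z + Complex.I * A * (t * z)
      = (p + Complex.I * (t * (r + A) : ℝ)) * z := by
    rw [eq_I_mul_mul_re_div_of_inner_eq_zero hz hzw]
    push_cast
    ring
  have ht2 : t ^ 2 ≤ 1 := (sq_le_one_iff_abs_le_one t).mpr ht
  rw [hexpr, norm_mul, hz, mul_one, Complex.sq_norm, Complex.normSq_apply]
  simp only [Complex.add_re, Complex.ofReal_re, Complex.mul_re, Complex.I_re, Complex.I_im,
    Complex.ofReal_im, Complex.add_im, Complex.mul_im]
  nlinarith [sq_nonneg (r + A)]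

theorem setIntegral_le_integral_add_setIntegral_of_ae_le_add_indicator {α : Type*}
    [MeasurableSpace α] {μ : Measure α} {s t : Set α} {f g h : α → ℝ} (ht : MeasurableSet t)
    (hts : t ⊆ s) (hf : 0 ≤ᵐ[μ.restrict s] f) (hg : Integrable g μ) (hg0 : 0 ≤ᵐ[μ] g)
    (hh : IntegrableOn h t μ) (hfgh : ∀ᵐ x ∂μ.restrict s, f x ≤ g x + t.indicator h x) :
    ∫ x in s, f x ∂μ ≤ ∫ x, g x ∂μ + ∫ x in t, h x ∂μ := by
  have hh' : Integrable (t.indicator h) μ := hh.integrable_indicator ht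
  calc ∫ x in s, f x ∂μ ≤ ∫ x in s, (g x + t.indicator h x) ∂μ :=
        integral_mono_of_nonneg hf (hg.integrableOn.add hh'.integrableOn) hfgh
    _ = (∫ x in s, g x ∂μ) + ∫ x in t, h x ∂μ := by
        rw [integral_add hg.integrableOn hh'.integrableOn, setIntegral_indicator ht,
          Set.inter_eq_self_of_subset_right hts]
    _ ≤ ∫ x, g x ∂μ + ∫ x in t, h x ∂μ := add_le_add_left (setIntegral_le_integral hg hg0) _

section MagneticForm

variable {n : ℕ}

noncomputable def gradNormSq (f : (Fin n → ℝ) → ℝ) (x : Fin n → ℝ) : ℝ :=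
  ∑ j : Fin n, (fderiv ℝ f x (Pi.single j 1)) ^ 2

noncomputable def magneticDensity (a : (Fin n → ℝ) → (Fin n → ℝ)) (V : (Fin n → ℝ) → ℝ)
    (u : (Fin n → ℝ) → ℂ) (x : Fin n → ℝ) : ℝ :=
  (∑ j : Fin n, ‖fderiv ℝ u x (Pi.single j 1) + Complex.I * (a x j) * u x‖ ^ 2) + V x * ‖u x‖ ^ 2

/-- The paper's `|∇ω/(iω) + a|² + V`; where `|ω| = 1`, `∇ω/(iω)` is real almost everywhere. -/
noncomputable def phaseDensity (a : (Fin n → ℝ) → (Fin n → ℝ)) (V : (Fin n → ℝ) → ℝ)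
    (ω : (Fin n → ℝ) → ℂ) (x : Fin n → ℝ) : ℝ :=
  (∑ j : Fin n, (((fderiv ℝ ω x (Pi.single j 1)) / (Complex.I * ω x)).re + a x j) ^ 2) + V x

variable {a : (Fin n → ℝ) → (Fin n → ℝ)} {V : (Fin n → ℝ) → ℝ} {c : (Fin n → ℝ) → ℝ}
  {ω : (Fin n → ℝ) → ℂ} {x : Fin n → ℝ}

theorem gradNormSq_nonneg (f : (Fin n → ℝ) → ℝ) (x : Fin n → ℝ) : 0 ≤ gradNormSq f x :=
  Finset.sum_nonneg fun _ _ => sq_nonneg _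

theorem gradNormSq_const_sub (b : ℝ) (f : (Fin n → ℝ) → ℝ) :
    gradNormSq (fun y => b - f y) = gradNormSq f := by
  funext x
  simp [gradNormSq, fderiv_const_sub]

theorem magneticDensity_nonneg (u : (Fin n → ℝ) → ℂ) (hV : 0 ≤ V x) :
    0 ≤ magneticDensity a V u x :=
  add_nonneg (Finset.sum_nonneg fun _ _ => sq_nonneg _) (mul_nonneg hV (sq_nonneg _))

theorem magneticDensity_ofReal_mul_le_gradNormSq {F : Set (Fin n → ℝ)} (hcF : ∀ y ∈ F, c y = 0)
    (hxF : x ∈ F) (hω : x ∉ interior F → DifferentiableAt ℝ ω x ∧ ‖ω x‖ = 1) :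
    magneticDensity a V (fun y => (c y : ℂ) * ω y) x ≤ gradNormSq c x := by
  simp only [magneticDensity, hcF x hxF, Complex.ofReal_zero, zero_mul, mul_zero, add_zero,
    norm_zero, ne_eq, OfNat.ofNat_ne_zero, not_false_eq_true, zero_pow]
  by_cases hint : x ∈ interior F
  · have hu : (fun y => (c y : ℂ) * ω y) =ᶠ[nhds x] fun _ => 0 := by
      filter_upwards [mem_interior_iff_mem_nhds.mp hint] with y hy
      simp [hcF y hy]
    simpa [hu.fderiv_eq] using gradNormSq_nonneg c x
  · obtain ⟨hωd, hω1⟩ := hω hint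
    have hω0 : ω x ≠ 0 := by rintro h; simp [h] at hω1
    refine le_of_eq (Finset.sum_congr rfl fun j _ => ?_)
    rw [fderiv_ofReal_mul_apply_of_eq_zero (hcF x hxF) hωd hω0, norm_mul, hω1, mul_one,
      Complex.norm_real, Real.norm_eq_abs, sq_abs]

theorem magneticDensity_ofReal_mul_le (hc : DifferentiableAt ℝ c x)
    (hω : DifferentiableAt ℝ ω x) (hω1 : ‖ω x‖ = 1) (horth : ∀ v, ⟪ω x, fderiv ℝ ω x v⟫ = 0)
    (hc1 : |c x| ≤ 1) (hV : 0 ≤ V x) :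
    magneticDensity a V (fun y => (c y : ℂ) * ω y) x ≤ gradNormSq c x + phaseDensity a V ω x := by
  have hterm : ∀ j : Fin n,
      ‖fderiv ℝ (fun y => (c y : ℂ) * ω y) x (Pi.single j 1)
          + Complex.I * (a x j) * (c x * ω x)‖ ^ 2
        ≤ (fderiv ℝ c x (Pi.single j 1)) ^ 2
          + (((fderiv ℝ ω x (Pi.single j 1)) / (Complex.I * ω x)).re + a x j) ^ 2 := fun j => by
    rw [fderiv_ofReal_mul_apply hc hω]
    exact norm_sq_tangent_add_le hω1 (horth _) hc1 _ _
  have hpot : V x * ‖(c x : ℂ) * ω x‖ ^ 2 ≤ V x := by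
    rw [norm_mul, hω1, mul_one, Complex.norm_real, Real.norm_eq_abs, sq_abs]
    exact mul_le_of_le_one_right hV ((sq_le_one_iff_abs_le_one _).mpr hc1)
  have hsum := Finset.sum_le_sum fun j (_ : j ∈ Finset.univ) => hterm j
  rw [Finset.sum_add_distrib] at hsum
  simp only [magneticDensity, gradNormSq, phaseDensity]
  linarith

end MagneticForm

theorem test_function_form_upper_bound_general {n : ℕ}
    (a : (Fin n → ℝ) → (Fin n → ℝ)) (V : (Fin n → ℝ) → ℝ) (hV0 : ∀ x, 0 ≤ V x)
    (Q F e : Set (Fin n → ℝ)) (hQm : MeasurableSet Q) (hFm : MeasurableSet F)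
    (he : e ⊆ interior F)
    (PF : (Fin n → ℝ) → ℝ) (hP0 : ∀ x, 0 ≤ PF x) (hP1 : ∀ x, PF x ≤ 1)
    (hPF : ∀ x ∈ F, PF x = 1)
    (hPdiff : ∀ x ∉ F, DifferentiableAt ℝ PF x)
    (capF : ℝ)
    (hcap : capF = ∫ x, ∑ j : Fin n, (fderiv ℝ PF x (Pi.single j 1)) ^ 2)
    (hcapInt : Integrable (fun x => ∑ j : Fin n, (fderiv ℝ PF x (Pi.single j 1)) ^ 2))
    (ω : (Fin n → ℝ) → ℂ) (hω1 : ∀ x ∈ Q \ e, ‖ω x‖ = 1)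
    (hωdiff : ∀ x ∈ Q \ e, DifferentiableAt ℝ ω x)
    (u : (Fin n → ℝ) → ℂ) (hu : ∀ x, u x = ((1 - PF x : ℝ) : ℂ) * ω x)
    (hRHSint : IntegrableOn (fun x =>
      (∑ j : Fin n, (((fderiv ℝ ω x (Pi.single j 1)) / (Complex.I * ω x)).re + a x j) ^ 2)
        + V x) (Q \ F)) :
    (∫ x in Q, ((∑ j : Fin n,
        ‖fderiv ℝ u x (Pi.single j 1) + Complex.I * (a x j) * u x‖ ^ 2)
      + V x * ‖u x‖ ^ 2)) ≤
    capF + ∫ x in Q \ F, ((∑ j : Fin n,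
        (((fderiv ℝ ω x (Pi.single j 1)) / (Complex.I * ω x)).re + a x j) ^ 2)
      + V x) := by
  change ∫ x in Q, magneticDensity a V u x ≤ capF + ∫ x in Q \ F, phaseDensity a V ω x
  obtain rfl : u = fun y => ((1 - PF y : ℝ) : ℂ) * ω y := funext hu
  have hQFm : MeasurableSet (Q \ F) := hQm.diff hFm
  have hQFe : Q \ F ⊆ Q \ e := Set.sdiff_subset_sdiff_right (he.trans interior_subset)
  have horth := (ae_restrict_iff' hQFm).mp <| ae_inner_fderiv_eq_zero_of_norm_eq_const volume hQFm
    (fun x hx => hω1 x (hQFe hx)) fun x hx => hωdiff x (hQFe hx)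
  have hbound : ∀ᵐ x ∂volume.restrict Q,
      magneticDensity a V (fun y => ((1 - PF y : ℝ) : ℂ) * ω y) x
        ≤ gradNormSq PF x + (Q \ F).indicator (phaseDensity a V ω) x := by
    filter_upwards [ae_restrict_mem hQm, ae_restrict_of_ae horth] with x hxQ hxorth
    rw [← gradNormSq_const_sub 1 PF]
    by_cases hxF : x ∈ F
    · rw [Set.indicator_of_notMem (fun h => h.2 hxF), add_zero]
      refine magneticDensity_ofReal_mul_le_gradNormSq (fun y hy => by simp [hPF y hy]) hxF
        fun hint => ?_
      have hxe : x ∈ Q \ e := ⟨hxQ, fun hxe => hint (he hxe)⟩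
      exact ⟨hωdiff x hxe, hω1 x hxe⟩
    · have hxQF : x ∈ Q \ F := ⟨hxQ, hxF⟩
      rw [Set.indicator_of_mem hxQF]
      exact magneticDensity_ofReal_mul_le ((hPdiff x hxF).const_sub 1) (hωdiff x (hQFe hxQF))
        (hω1 x (hQFe hxQF)) (hxorth hxQF)
        (abs_le.mpr ⟨by linarith [hP1 x], by linarith [hP0 x]⟩) (hV0 x)
  exact hcap ▸ setIntegral_le_integral_add_setIntegral_of_ae_le_add_indicator hQFm Set.sdiff_subset
    (ae_of_all _ fun x => magneticDensity_nonneg _ (hV0 x)) hcapInt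
    (ae_of_all _ (gradNormSq_nonneg PF)) hRHSint hbound

/-- with `u = (1 − P_F)ω` where `P_F` is the equilibrium potential of `F`
(`0 ≤ P_F ≤ 1`, `P_F = 1` on `F`, `∫|∇P_F|² = cap(F)`), and `ω` smooth of modulus one on
`Q ∖ e` (`e ⊆ Int F`), the localized magnetic form satisfies
`h_{a,V}(u,u)_{Q} ≤ cap(F) + ∫_{Q∖F} (|∇ω/(iω) + a|² + V) dx`. -/
theorem test_function_form_upper_bound {n : ℕ}
    (a : (Fin n → ℝ) → (Fin n → ℝ)) (V : (Fin n → ℝ) → ℝ) (hV0 : ∀ x, 0 ≤ V x)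
    (Q F e : Set (Fin n → ℝ)) (hQm : MeasurableSet Q) (hFm : MeasurableSet F)
    (hFcomp : IsCompact F) (hFQ : F ⊆ Q) (he : e ⊆ interior F) (hecomp : IsCompact e)
    (PF : (Fin n → ℝ) → ℝ) (hP0 : ∀ x, 0 ≤ PF x) (hP1 : ∀ x, PF x ≤ 1)
    (hPF : ∀ x ∈ F, PF x = 1)
    (hPdiff : ∀ x ∉ F, DifferentiableAt ℝ PF x)
    (capF : ℝ)
    (hcap : capF = ∫ x, ∑ j : Fin n, (fderiv ℝ PF x (Pi.single j 1)) ^ 2)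
    (hcapInt : Integrable (fun x => ∑ j : Fin n, (fderiv ℝ PF x (Pi.single j 1)) ^ 2))
    (ω : (Fin n → ℝ) → ℂ) (hω1 : ∀ x ∈ Q \ e, ‖ω x‖ = 1)
    (hωdiff : ∀ x ∈ Q \ e, DifferentiableAt ℝ ω x)
    (u : (Fin n → ℝ) → ℂ) (hu : ∀ x, u x = ((1 - PF x : ℝ) : ℂ) * ω x)
    (hRHSint : IntegrableOn (fun x =>
      (∑ j : Fin n, (((fderiv ℝ ω x (Pi.single j 1)) / (Complex.I * ω x)).re + a x j) ^ 2)
        + V x) (Q \ F)) :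
    (∫ x in Q, ((∑ j : Fin n,
        ‖fderiv ℝ u x (Pi.single j 1) + Complex.I * (a x j) * u x‖ ^ 2)
      + V x * ‖u x‖ ^ 2)) ≤
    capF + ∫ x in Q \ F, ((∑ j : Fin n,
        (((fderiv ℝ ω x (Pi.single j 1)) / (Complex.I * ω x)).re + a x j) ^ 2)
      + V x) :=
  test_function_form_upper_bound_general a V hV0 Q F e hQm hFm he PF hP0 hP1 hPF hPdiff capF hcap
    hcapInt ω hω1 hωdiff u hu hRHSint
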